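/- arXiv:0812.1639 — 2 statements merged into one kernel-verified Lean document; each statement's English description precedes it below -/
import Mathlib

section
/- Let G be a symmetric positive definite matrix indexed by a finite set T, let q > 1, and define ρ₁ = inf { ⟨f, G⁻¹ f⟩ : ‖f‖_{2q} = 1 } and ρ₂ = sup { ⟨f, G f⟩ : ‖f‖_{2q/(2q-1)} = 1 }, where ‖f‖_p = (∑_{x∈T} |f(x)|^p)^{1/p}. Then ρ₂ = 1/ρ₁. -/
/-!
Cauchy–Schwarz for the form `(u, v) ↦ u ⬝ᵥ G v`, applied to `f` and `G⁻¹ g`, gives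
`(f ⬝ᵥ g)² ≤ ⟨f, G f⟩ ⟨g, G⁻¹ g⟩`. For `‖f‖_r = 1` take `g = G f / ‖G f‖_p`: by Hölder,
`⟨f, G f⟩ ≤ ‖G f‖_p`, hence `⟨f, G f⟩ ⟨g, G⁻¹ g⟩ = (⟨f, G f⟩ / ‖G f‖_p)² ≤ 1`. For `‖g‖_p = 1`
take the Hölder-dual vector `f = sign g · |g|^(p-1)`, with `‖f‖_r = 1` and `f ⬝ᵥ g = 1`, so that
`1 ≤ ⟨f, G f⟩ ⟨g, G⁻¹ g⟩`. Thus the values `⟨f, G f⟩` and the inverses of the values `⟨g, G⁻¹ g⟩`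
dominate each other, and have the same supremum.
-/

open Finset
open scoped Pointwise

lemma Real.sSup_inv_eq_inv_sInf {S : Set ℝ} (hS : ∀ t ∈ S, 0 < t) : sSup S⁻¹ = (sInf S)⁻¹ := by
  rcases S.eq_empty_or_nonempty with rfl | hne
  · simp
  rcases (le_csInf hne fun t ht => (hS t ht).le).eq_or_lt with hzero | hpos
  · -- `S⁻¹` is unbounded above, so both sides are the junk value `0`
    rw [← hzero, _root_.inv_zero]
    refine Real.sSup_of_not_bddAbove fun ⟨B, hB⟩ => ?_
    obtain ⟨t, ht, htB⟩ : ∃ t ∈ S, t < (max B 1)⁻¹ :=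
      exists_lt_of_csInf_lt hne (by rw [← hzero]; positivity)
    have hle : t⁻¹ ≤ B := hB (Set.inv_mem_inv.mpr ht)
    have hlt : max B 1 < t⁻¹ := (lt_inv_comm₀ (hS t ht) (by positivity)).mp htB
    linarith [le_max_left B 1]
  · refine IsLUB.csSup_eq ⟨fun x hx => ?_, fun b hb => ?_⟩ hne.inv
    · simpa using inv_anti₀ hpos (csInf_le ⟨0, fun t ht => (hS t ht).le⟩ (Set.mem_inv.mp hx))
    · obtain ⟨t, ht⟩ := hne
      have hb0 : 0 < b := (inv_pos.mpr (hS t ht)).trans_le (hb (Set.inv_mem_inv.mpr ht))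
      refine inv_le_of_inv_le₀ hb0 (le_csInf ⟨t, ht⟩ fun s hs => ?_)
      exact inv_le_of_inv_le₀ (hS s hs) (hb (Set.inv_mem_inv.mpr hs))

lemma Real.sSup_eq_inv_sInf_of_forall_exists {S T : Set ℝ} (hT : ∀ t ∈ T, 0 < t)
    (hST : ∀ s ∈ S, ∃ t ∈ T, s * t ≤ 1) (hTS : ∀ t ∈ T, ∃ s ∈ S, 1 ≤ s * t) :
    sSup S = (sInf T)⁻¹ := by
  rw [← Real.sSup_inv_eq_inv_sInf hT]
  refine csSup_eq_csSup_of_forall_exists_le (fun s hs => ?_) (fun y hy => ?_)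
  · obtain ⟨t, ht, hst⟩ := hST s hs
    exact ⟨t⁻¹, Set.inv_mem_inv.mpr ht, by rwa [← one_div, le_div_iff₀ (hT t ht)]⟩
  · obtain ⟨s, hs, hys⟩ := hTS y⁻¹ hy
    exact ⟨s, hs, by simpa using (le_mul_inv_iff₀ (inv_pos.mp (hT _ hy))).mp hys⟩

section LpSphere

variable {ι : Type*} [Fintype ι] {p r : ℝ} {f g : ι → ℝ}

lemma rpow_sum_abs_rpow_eq_one_iff {e : ℝ} (he : e ≠ 0) :
    (∑ i, |f i| ^ p) ^ e = 1 ↔ ∑ i, |f i| ^ p = 1 := by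
  conv_lhs => rw [← Real.one_rpow e]
  exact Real.rpow_left_inj (by positivity) zero_le_one he

lemma ne_zero_of_sum_abs_rpow_eq_one (hp : p ≠ 0) (hf : ∑ i, |f i| ^ p = 1) : f ≠ 0 := by
  rintro rfl
  simp [Real.zero_rpow hp] at hf

lemma sum_abs_rpow_pos (hf : f ≠ 0) : 0 < ∑ i, |f i| ^ p := by
  obtain ⟨i, hi⟩ := Function.ne_iff.mp hf
  exact sum_pos' (fun j _ => by positivity) ⟨i, mem_univ i, Real.rpow_pos_of_pos (abs_pos.mpr hi) p⟩

lemma sum_abs_rpow_smul (c : ℝ) : ∑ i, |(c • f) i| ^ p = |c| ^ p * ∑ i, |f i| ^ p := by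
  simp only [mul_sum, Pi.smul_apply, smul_eq_mul, abs_mul,
    Real.mul_rpow (abs_nonneg _) (abs_nonneg _)]

lemma sum_abs_rpow_inv_smul_eq_one (hp : p ≠ 0) (hf : f ≠ 0) :
    ∑ i, |(((∑ j, |f j| ^ p) ^ (1 / p))⁻¹ • f) i| ^ p = 1 := by
  have hpos := sum_abs_rpow_pos (p := p) hf
  rw [sum_abs_rpow_smul, abs_inv, abs_of_pos (by positivity), Real.inv_rpow (by positivity),
    ← Real.rpow_mul hpos.le, one_div_mul_cancel hp, Real.rpow_one, inv_mul_cancel₀ hpos.ne']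

lemma exists_dotProduct_eq_one_of_sum_abs_rpow_eq_one (hpq : r.HolderConjugate p)
    (hg : ∑ i, |g i| ^ p = 1) : ∃ f : ι → ℝ, ∑ i, |f i| ^ r = 1 ∧ f ⬝ᵥ g = 1 := by
  set f : ι → ℝ := fun i => SignType.sign (g i) * |g i| ^ (p - 1)
  have habs (i : ι) : |f i| = |g i| ^ (p - 1) := by
    have hnn : 0 ≤ |g i| ^ (p - 1) := by positivity
    rcases lt_trichotomy (g i) 0 with h | h | h <;>
      simp [f, h, sign_neg, sign_pos, abs_of_nonneg hnn, Real.zero_rpow hpq.symm.sub_one_ne_zero]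
  refine ⟨f, ?_, ?_⟩
  · simp_rw [habs, ← Real.rpow_mul (abs_nonneg _), hpq.symm.sub_one_mul_conj, hg]
  · have hfg (i : ι) : f i * g i = |g i| ^ p := by
      rw [mul_right_comm, sign_mul_self,
        ← Real.rpow_one_add' (abs_nonneg _) (by simpa using hpq.symm.ne_zero)]
      ring_nf
    simp_rw [dotProduct, hfg, hg]

end LpSphere

open Matrix

section Quadratic

variable {n : Type*} [Fintype n] [DecidableEq n] {G : Matrix n n ℝ}

lemma Matrix.PosDef.sq_dotProduct_le (hG : G.PosDef) (f g : n → ℝ) :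
    (f ⬝ᵥ g) ^ 2 ≤ (f ⬝ᵥ (G *ᵥ f)) * (g ⬝ᵥ (G⁻¹ *ᵥ g)) := by
  set h := G⁻¹ *ᵥ g
  have hGh : G *ᵥ h = g := by
    rw [mulVec_mulVec, mul_nonsing_inv G (G.isUnit_iff_isUnit_det.mp hG.isUnit), one_mulVec]
  have hhG : h ᵥ* G = g := by
    conv_lhs => rw [← isHermitian_iff_isSymm.mp hG.isHermitian]
    rw [vecMul_transpose, hGh]
  have hcs := LinearMap.BilinForm.apply_mul_apply_le_of_forall_zero_le (toLinearMap₂' ℝ G)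
    (fun x => by simpa [toLinearMap₂'_apply'] using hG.posSemidef.dotProduct_mulVec_nonneg x) f h
  simp only [toLinearMap₂'_apply'] at hcs
  rwa [dotProduct_mulVec h, hhG, hGh, dotProduct_comm g f, ← sq, dotProduct_comm h g] at hcs

variable {p r : ℝ}

lemma Matrix.PosDef.exists_mul_le_one_of_sum_abs_rpow_eq_one (hG : G.PosDef)
    (hpq : r.HolderConjugate p) {f : n → ℝ} (hf : ∑ i, |f i| ^ r = 1) :
    ∃ g : n → ℝ, ∑ i, |g i| ^ p = 1 ∧ (f ⬝ᵥ (G *ᵥ f)) * (g ⬝ᵥ (G⁻¹ *ᵥ g)) ≤ 1 := by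
  set u := G *ᵥ f
  have hu : u ≠ 0 := fun hu => ne_zero_of_sum_abs_rpow_eq_one hpq.ne_zero hf <|
    mulVec_injective_iff_isUnit.mpr hG.isUnit (hu.trans (mulVec_zero G).symm)
  set N := (∑ i, |u i| ^ p) ^ (1 / p)
  have hN : 0 < N := by have := sum_abs_rpow_pos (p := p) hu; positivity
  have hfu_nonneg : 0 ≤ f ⬝ᵥ u := by simpa using hG.posSemidef.dotProduct_mulVec_nonneg f
  have hfu_le : f ⬝ᵥ u ≤ N := by
    simpa [hf, dotProduct, N] using Real.inner_le_Lp_mul_Lq univ f u hpq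
  have hGu : G⁻¹ *ᵥ u = f := by
    rw [mulVec_mulVec, nonsing_inv_mul G (G.isUnit_iff_isUnit_det.mp hG.isUnit), one_mulVec]
  refine ⟨N⁻¹ • u, sum_abs_rpow_inv_smul_eq_one hpq.symm.ne_zero hu, ?_⟩
  rw [mulVec_smul, hGu, smul_dotProduct, dotProduct_smul, dotProduct_comm u f, smul_eq_mul,
    smul_eq_mul]
  calc f ⬝ᵥ u * (N⁻¹ * (N⁻¹ * f ⬝ᵥ u)) = (f ⬝ᵥ u / N) ^ 2 := by ring
    _ ≤ 1 := pow_le_one₀ (by positivity) ((div_le_one hN).mpr hfu_le)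

lemma Matrix.PosDef.exists_one_le_mul_of_sum_abs_rpow_eq_one (hG : G.PosDef)
    (hpq : r.HolderConjugate p) {g : n → ℝ} (hg : ∑ i, |g i| ^ p = 1) :
    ∃ f : n → ℝ, ∑ i, |f i| ^ r = 1 ∧ 1 ≤ (f ⬝ᵥ (G *ᵥ f)) * (g ⬝ᵥ (G⁻¹ *ᵥ g)) := by
  obtain ⟨f, hf, hfg⟩ := exists_dotProduct_eq_one_of_sum_abs_rpow_eq_one hpq hg
  exact ⟨f, hf, by simpa [hfg] using hG.sq_dotProduct_le f g⟩

theorem Matrix.PosDef.sSup_quadratic_eq_inv_sInf_quadratic_inv (hG : G.PosDef)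
    (hpq : r.HolderConjugate p) :
    sSup {s : ℝ | ∃ f : n → ℝ, ∑ i, |f i| ^ r = 1 ∧ s = f ⬝ᵥ (G *ᵥ f)} =
      (sInf {t : ℝ | ∃ g : n → ℝ, ∑ i, |g i| ^ p = 1 ∧ t = g ⬝ᵥ (G⁻¹ *ᵥ g)})⁻¹ := by
  refine Real.sSup_eq_inv_sInf_of_forall_exists ?_ ?_ ?_
  · rintro _ ⟨g, hg, rfl⟩
    simpa using hG.inv.dotProduct_mulVec_pos (ne_zero_of_sum_abs_rpow_eq_one hpq.symm.ne_zero hg)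
  · rintro _ ⟨f, hf, rfl⟩
    obtain ⟨g, hg, hfg⟩ := hG.exists_mul_le_one_of_sum_abs_rpow_eq_one hpq hf
    exact ⟨_, ⟨g, hg, rfl⟩, hfg⟩
  · rintro _ ⟨g, hg, rfl⟩
    obtain ⟨f, hf, hfg⟩ := hG.exists_one_le_mul_of_sum_abs_rpow_eq_one hpq hg
    exact ⟨_, ⟨f, hf, rfl⟩, hfg⟩

end Quadratic

theorem sSup_quadratic_eq_inv_sInf_quadratic_general
    {T : Type*} [Fintype T] [DecidableEq T]
    (G : Matrix T T ℝ) (hpd : G.PosDef) (q : ℝ) (hq : 1 < q) :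
    sSup {s : ℝ | ∃ f : T → ℝ,
        (∑ x : T, |f x| ^ (2 * q / (2 * q - 1))) ^ ((2 * q - 1) / (2 * q)) = 1 ∧
        s = f ⬝ᵥ (G *ᵥ f)}
      = 1 / sInf {s : ℝ | ∃ f : T → ℝ,
        (∑ x : T, |f x| ^ (2 * q)) ^ (1 / (2 * q)) = 1 ∧
        s = f ⬝ᵥ (G⁻¹ *ᵥ f)} := by
  have hpq : (2 * q / (2 * q - 1)).HolderConjugate (2 * q) :=
    (Real.HolderConjugate.conjExponent (by linarith)).symm
  have hr : (2 * q - 1) / (2 * q) ≠ 0 := div_ne_zero (by linarith) (by linarith)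
  have hp : 1 / (2 * q) ≠ 0 := one_div_ne_zero (by linarith)
  simp only [rpow_sum_abs_rpow_eq_one_iff hr, rpow_sum_abs_rpow_eq_one_iff hp, one_div (sInf _)]
  exact hpd.sSup_quadratic_eq_inv_sInf_quadratic_inv hpq

/-- For a symmetric positive definite matrix `G` on a finite set `T` and `q > 1`,
`ρ₂ = sup{⟨f,Gf⟩ : ‖f‖_{2q/(2q-1)} = 1}` equals `1/ρ₁` where
`ρ₁ = inf{⟨f,G⁻¹f⟩ : ‖f‖_{2q} = 1}`. -/
theorem sSup_quadratic_eq_inv_sInf_quadratic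
    {T : Type*} [Fintype T] [Nonempty T] [DecidableEq T]
    (G : Matrix T T ℝ) (hsym : G.IsSymm) (hpd : G.PosDef) (q : ℝ) (hq : 1 < q) :
    sSup {s : ℝ | ∃ f : T → ℝ,
        (∑ x : T, |f x| ^ (2 * q / (2 * q - 1))) ^ ((2 * q - 1) / (2 * q)) = 1 ∧
        s = f ⬝ᵥ (G *ᵥ f)}
      = 1 / sInf {s : ℝ | ∃ f : T → ℝ,
        (∑ x : T, |f x| ^ (2 * q)) ^ (1 / (2 * q)) = 1 ∧
        s = f ⬝ᵥ (G⁻¹ *ᵥ f)} :=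
  sSup_quadratic_eq_inv_sInf_quadratic_general G hpd q hq
end

section
/- Let (Z_x)_{x∈T} be a centered Gaussian vector indexed by a finite set T with covariance G, let q ≥ 1, and let ρ₂ = sup { ⟨f, G f⟩ : ‖f‖_{(2q)'} = 1 }, where (2q)' = 2q/(2q−1). Then for every b > 0, P( ‖Z‖_{2q} ≥ b ) ≥ (√ρ₂ / (√(2π) b)) · (1 − ρ₂/b²) · exp( − b²/(2ρ₂) ). -/
/-!
Testing `Z` against a maximiser `f` of `⟨f, G f⟩` on the unit sphere of `ℓ^{(2q)'}` gives, by
Hölder, `⟨f, Z⟩ ≤ ‖Z‖_{2q}`; and `⟨f, Z⟩` is a centered Gaussian of variance `ρ₂`. The theorem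
is then the classical lower bound `P(N(0, v) ≥ b) ≥ √v/(√(2π) b) (1 - v/b²) e^{-b²/2v}`, obtained
by integrating over `[b, ∞)` the inequality `F' ≤ e^{-x²/2v}` for
`F x = -(v/x - v²/x³) e^{-x²/2v}`, whose derivative is `(1 - 3v²/x⁴) e^{-x²/2v}`.
-/

open MeasureTheory ProbabilityTheory Matrix Real Set Filter Topology

section GaussianTail

variable {v : ℝ}

theorem hasDerivAt_gaussian_tail_antideriv (hv : v ≠ 0) {x : ℝ} (hx : x ≠ 0) :
    HasDerivAt (fun y => -((v / y - v ^ 2 / y ^ 3) * exp (-y ^ 2 / (2 * v))))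
      ((1 - 3 * v ^ 2 / x ^ 4) * exp (-x ^ 2 / (2 * v))) x := by
  have hu : HasDerivAt (fun y => v / y - v ^ 2 / y ^ 3) (-v / x ^ 2 + 3 * v ^ 2 / x ^ 4) x :=
    (((hasDerivAt_const x v).fun_div (hasDerivAt_id' x) hx).fun_sub
      ((hasDerivAt_const x (v ^ 2)).fun_div (hasDerivAt_pow 3 x) (pow_ne_zero 3 hx))).congr_deriv
      (by field_simp; ring)
  have he : HasDerivAt (fun y => exp (-y ^ 2 / (2 * v))) (exp (-x ^ 2 / (2 * v)) * (-x / v)) x :=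
    (((hasDerivAt_pow 2 x).fun_neg.div_const (2 * v)).exp).congr_deriv (by field_simp; ring)
  exact (hu.fun_mul he).fun_neg.congr_deriv (by field_simp; ring)

theorem tendsto_gaussian_tail_antideriv (hv : 0 < v) :
    Tendsto (fun y => -((v / y - v ^ 2 / y ^ 3) * exp (-y ^ 2 / (2 * v)))) atTop (𝓝 0) := by
  have hu : Tendsto (fun y : ℝ => v / y - v ^ 2 / y ^ 3) atTop (𝓝 0) := by
    simpa using (tendsto_const_nhds.div_atTop tendsto_id).sub
      (tendsto_const_nhds.div_atTop (tendsto_pow_atTop (α := ℝ) (n := 3) (by norm_num)))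
  have he : Tendsto (fun y : ℝ => exp (-y ^ 2 / (2 * v))) atTop (𝓝 0) :=
    tendsto_exp_atBot.comp <| (tendsto_neg_atTop_atBot.comp
      (tendsto_pow_atTop (n := 2) (by norm_num))).atBot_div_const (by positivity)
  simpa using (hu.mul he).neg

theorem integrable_exp_neg_sq_div (hv : 0 < v) :
    Integrable fun x : ℝ => exp (-x ^ 2 / (2 * v)) := by
  convert integrable_exp_neg_mul_sq (b := (2 * v)⁻¹) (by positivity) using 3
  ring

theorem le_integral_Ioi_exp_neg_sq_div (hv : 0 < v) {b : ℝ} (hb : 0 < b) :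
    (v / b - v ^ 2 / b ^ 3) * exp (-b ^ 2 / (2 * v)) ≤ ∫ x in Ioi b, exp (-x ^ 2 / (2 * v)) := by
  have hint := integrable_exp_neg_sq_div hv
  have hint_deriv :
      IntegrableOn (fun x => (1 - 3 * v ^ 2 / x ^ 4) * exp (-x ^ 2 / (2 * v))) (Ioi b) := by
    refine (hint.const_mul (1 + 3 * v ^ 2 / b ^ 4)).integrableOn.mono' (by fun_prop) ?_
    filter_upwards [ae_restrict_mem measurableSet_Ioi] with x (hx : b < x)
    have : 3 * v ^ 2 / x ^ 4 ≤ 3 * v ^ 2 / b ^ 4 := by gcongr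
    rw [norm_mul, norm_of_nonneg (exp_nonneg _)]
    gcongr
    rw [norm_eq_abs, abs_le]
    constructor <;> nlinarith [show 0 ≤ 3 * v ^ 2 / x ^ 4 by positivity]
  calc (v / b - v ^ 2 / b ^ 3) * exp (-b ^ 2 / (2 * v))
      = ∫ x in Ioi b, (1 - 3 * v ^ 2 / x ^ 4) * exp (-x ^ 2 / (2 * v)) := by
        rw [integral_Ioi_of_hasDerivAt_of_tendsto'
          (fun x hx => hasDerivAt_gaussian_tail_antideriv hv.ne' (hb.trans_le hx).ne') hint_deriv
          (tendsto_gaussian_tail_antideriv hv)]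
        ring
    _ ≤ ∫ x in Ioi b, exp (-x ^ 2 / (2 * v)) :=
        setIntegral_mono_on hint_deriv hint.integrableOn measurableSet_Ioi fun x hx =>
          mul_le_of_le_one_left (exp_nonneg _) (sub_le_self _ (by positivity))

theorem gaussianReal_Ici_lower_bound (v : ℝ) {b : ℝ} (hb : 0 < b) :
    √v / (√(2 * π) * b) * (1 - v / b ^ 2) * exp (-b ^ 2 / (2 * v))
      ≤ (gaussianReal 0 v.toNNReal (Ici b)).toReal := by
  rcases le_or_gt v 0 with hv | hv
  · simp [sqrt_eq_zero'.2 hv]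
  rcases le_or_gt (b ^ 2) v with hbv | hvb
  · refine le_trans ?_ ENNReal.toReal_nonneg
    have : 1 - v / b ^ 2 ≤ 0 := sub_nonpos.2 ((one_le_div (by positivity)).2 hbv)
    have := mul_nonpos_of_nonneg_of_nonpos (by positivity : 0 ≤ √v / (√(2 * π) * b)) this
    exact mul_nonpos_of_nonpos_of_nonneg this (exp_nonneg _)
  have hv' : v.toNNReal ≠ 0 := by simpa using hv
  rw [gaussianReal_apply_eq_integral 0 hv', ENNReal.toReal_ofReal
    (setIntegral_nonneg measurableSet_Ici fun x _ => gaussianPDFReal_nonneg _ _ _),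
    integral_Ici_eq_integral_Ioi]
  simp only [gaussianPDFReal, coe_toNNReal _ hv.le, sub_zero]
  rw [integral_const_mul]
  calc √v / (√(2 * π) * b) * (1 - v / b ^ 2) * exp (-b ^ 2 / (2 * v))
      = (√(2 * π * v))⁻¹ * ((v / b - v ^ 2 / b ^ 3) * exp (-b ^ 2 / (2 * v))) := by
        rw [sqrt_mul' _ hv.le]
        field_simp
        exact sq_sqrt hv.le
    _ ≤ _ := by gcongr; exact le_integral_Ioi_exp_neg_sq_div hv hb

end GaussianTail

theorem rpow_eq_one_iff_of_nonneg {x y : ℝ} (hx : 0 ≤ x) (hy : y ≠ 0) : x ^ y = 1 ↔ x = 1 := by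
  rw [← rpow_left_inj hx zero_le_one hy, one_rpow]

section UnitSphere

variable {T : Type*} [Fintype T] {p : ℝ}

theorem isCompact_setOf_sum_abs_rpow_eq_one (hp : 0 < p) :
    IsCompact {f : T → ℝ | ∑ x, |f x| ^ p = 1} := by
  have hcont : Continuous fun f : T → ℝ => ∑ x, |f x| ^ p :=
    continuous_finsetSum _ fun x _ => (continuous_rpow_const hp.le).comp (continuous_apply x).abs
  refine Metric.isCompact_of_isClosed_isBounded (isClosed_eq hcont continuous_const) ?_
  refine (Metric.isBounded_closedBall (x := 0) (r := 1)).subset fun f (hf : _ = _) => ?_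
  refine mem_closedBall_zero_iff.2 ((pi_norm_le_iff_of_nonneg zero_le_one).2 fun x => ?_)
  have : |f x| ^ p ≤ 1 :=
    hf ▸ Finset.single_le_sum (fun y _ => rpow_nonneg (abs_nonneg (f y)) p) (Finset.mem_univ x)
  rwa [← one_rpow p, rpow_le_rpow_iff (abs_nonneg _) zero_le_one hp, ← norm_eq_abs] at this

theorem nonempty_setOf_sum_abs_rpow_eq_one [Nonempty T] (hp : 0 < p) :
    {f : T → ℝ | ∑ x, |f x| ^ p = 1}.Nonempty := by
  classical
  obtain ⟨x₀⟩ := ‹Nonempty T›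
  refine ⟨Pi.single x₀ 1, ?_⟩
  simp [Pi.single_apply, apply_ite, zero_rpow hp.ne']

theorem sum_mul_le_of_sum_abs_rpow_eq_one {r : ℝ} (hpr : p.HolderConjugate r) {f g : T → ℝ}
    (hf : ∑ x, |f x| ^ p = 1) : ∑ x, f x * g x ≤ (∑ x, |g x| ^ r) ^ (1 / r) := by
  simpa [hf] using inner_le_Lp_mul_Lq Finset.univ f g hpr

end UnitSphere

theorem gaussian_vector_lq_norm_lower_tail_general
    {Ω : Type*} [MeasurableSpace Ω] (P : Measure Ω) [IsProbabilityMeasure P]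
    {T : Type*} [Fintype T] [Nonempty T]
    (G : Matrix T T ℝ)
    (Z : Ω → T → ℝ)
    (hZ : ∀ f : T → ℝ,
      P.map (fun ω => ∑ x : T, f x * Z ω x) = gaussianReal 0 (Real.toNNReal (f ⬝ᵥ (G *ᵥ f))))
    (q : ℝ) (hq : 1 ≤ q) (b : ℝ) (hb : 0 < b) :
    Real.sqrt (sSup {s : ℝ | ∃ f : T → ℝ,
          (∑ x : T, |f x| ^ (2 * q / (2 * q - 1))) ^ ((2 * q - 1) / (2 * q)) = 1 ∧
          s = f ⬝ᵥ (G *ᵥ f)}) / (Real.sqrt (2 * π) * b)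
        * (1 - (sSup {s : ℝ | ∃ f : T → ℝ,
          (∑ x : T, |f x| ^ (2 * q / (2 * q - 1))) ^ ((2 * q - 1) / (2 * q)) = 1 ∧
          s = f ⬝ᵥ (G *ᵥ f)}) / b ^ 2)
        * Real.exp (-b ^ 2 / (2 * sSup {s : ℝ | ∃ f : T → ℝ,
          (∑ x : T, |f x| ^ (2 * q / (2 * q - 1))) ^ ((2 * q - 1) / (2 * q)) = 1 ∧
          s = f ⬝ᵥ (G *ᵥ f)}))
      ≤ (P {ω | b ≤ (∑ x : T, |Z ω x| ^ (2 * q)) ^ (1 / (2 * q))}).toReal := by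
  have hpq : (2 * q / (2 * q - 1)).HolderConjugate (2 * q) :=
    (HolderConjugate.conjExponent (by linarith)).symm
  have hsphere : {s : ℝ | ∃ f : T → ℝ,
      (∑ x : T, |f x| ^ (2 * q / (2 * q - 1))) ^ ((2 * q - 1) / (2 * q)) = 1 ∧
      s = f ⬝ᵥ (G *ᵥ f)} =
      (fun f => f ⬝ᵥ (G *ᵥ f)) '' {f : T → ℝ | ∑ x, |f x| ^ (2 * q / (2 * q - 1)) = 1} := by
    have he : (2 * q - 1) / (2 * q) ≠ 0 := by
      have : 0 < 2 * q - 1 := by linarith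
      positivity
    ext s
    simp only [mem_image, eq_comm (a := s), mem_ofPred_eq,
      rpow_eq_one_iff_of_nonneg (Finset.sum_nonneg fun _ _ => rpow_nonneg (abs_nonneg _) _) he]
  have hquad : Continuous fun f : T → ℝ => f ⬝ᵥ (G *ᵥ f) := by fun_prop
  obtain ⟨f, hf, hsup⟩ := (isCompact_setOf_sum_abs_rpow_eq_one hpq.pos).exists_sSup_image_eq
    (nonempty_setOf_sum_abs_rpow_eq_one hpq.pos) hquad.continuousOn
  have hf' : AEMeasurable (fun ω => ∑ x, f x * Z ω x) P :=
    aemeasurable_of_map_neZero (by rw [hZ f]; infer_instance)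
  rw [hsphere, hsup]
  calc _ ≤ (gaussianReal 0 (f ⬝ᵥ (G *ᵥ f)).toNNReal (Ici b)).toReal :=
        gaussianReal_Ici_lower_bound _ hb
    _ = (P {ω | b ≤ ∑ x, f x * Z ω x}).toReal := by
        rw [← hZ f, Measure.map_apply_of_aemeasurable hf' measurableSet_Ici]
        rfl
    _ ≤ _ := ENNReal.toReal_mono (measure_ne_top _ _) <| measure_mono fun ω hω =>
        le_trans hω (sum_mul_le_of_sum_abs_rpow_eq_one hpq hf)

/-- Lower tail bound for the `ℓ^{2q}` norm of a centered Gaussian vector with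
covariance `G`: with `ρ₂ = sup{⟨f,Gf⟩ : ‖f‖_{(2q)'} = 1}`,
`P(‖Z‖_{2q} ≥ b) ≥ (√ρ₂/(√(2π) b)) (1 − ρ₂/b²) exp(−b²/(2ρ₂))`. -/
theorem gaussian_vector_lq_norm_lower_tail
    {Ω : Type*} [MeasurableSpace Ω] (P : Measure Ω) [IsProbabilityMeasure P]
    {T : Type*} [Fintype T] [Nonempty T]
    (G : Matrix T T ℝ) (hpd : G.PosDef)
    (Z : Ω → T → ℝ)
    (hZ : ∀ f : T → ℝ,
      P.map (fun ω => ∑ x : T, f x * Z ω x) = gaussianReal 0 (Real.toNNReal (f ⬝ᵥ (G *ᵥ f))))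
    (q : ℝ) (hq : 1 ≤ q) (b : ℝ) (hb : 0 < b) :
    Real.sqrt (sSup {s : ℝ | ∃ f : T → ℝ,
          (∑ x : T, |f x| ^ (2 * q / (2 * q - 1))) ^ ((2 * q - 1) / (2 * q)) = 1 ∧
          s = f ⬝ᵥ (G *ᵥ f)}) / (Real.sqrt (2 * π) * b)
        * (1 - (sSup {s : ℝ | ∃ f : T → ℝ,
          (∑ x : T, |f x| ^ (2 * q / (2 * q - 1))) ^ ((2 * q - 1) / (2 * q)) = 1 ∧
          s = f ⬝ᵥ (G *ᵥ f)}) / b ^ 2)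
        * Real.exp (-b ^ 2 / (2 * sSup {s : ℝ | ∃ f : T → ℝ,
          (∑ x : T, |f x| ^ (2 * q / (2 * q - 1))) ^ ((2 * q - 1) / (2 * q)) = 1 ∧
          s = f ⬝ᵥ (G *ᵥ f)}))
      ≤ (P {ω | b ≤ (∑ x : T, |Z ω x| ^ (2 * q)) ^ (1 / (2 * q))}).toReal :=
  gaussian_vector_lq_norm_lower_tail_general P G Z hZ q hq b hb
end
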